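/- Let (X,φ) be a minimal Cantor system and let A, B be clopen subsets of X such that μ(B) < μ(A) for every φ-invariant Borel probability measure μ on X. Then there exists γ ∈ 𝔗(φ) such that γ(B) ⊆ A, γ² = id, and γ(x) = x for all x ∈ X \ (B ∪ γ(B)). -/

import Mathlib

/-!
Let `g = 𝟙_A - 𝟙_B`. If for every `N` some orbit segment of length `N` had a nonpositive
`g`-sum, a weak limit of the empirical measures of these segments would be a `φ`-invariant
probability measure with `μ A ≤ μ B` (Krylov–Bogolyubov). Hence there is an `N` such that the
`g`-sum over every orbit segment of length `N` is positive. Reading the points of `B \ A` on an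
orbit as opening brackets and those of `A \ B` as closing ones, match each `x ∈ B \ A` with the
first later point at which the running `g`-sum started after `x` becomes positive. That point lies
in `A \ B`, the matching is injective, and the matching time is locally constant, so exchanging
matched points is an involution in the topological full group.
-/

/-- The group of self-homeomorphisms of a topological space, under composition. -/
instance homeoGroup {X : Type*} [TopologicalSpace X] : Group (X ≃ₜ X) where
  mul a b := b.trans a
  one := Homeomorph.refl X
  inv := Homeomorph.symm
  mul_assoc a b c := rfl
  one_mul a := Homeomorph.ext fun _ => rfl
  mul_one a := Homeomorph.ext fun _ => rfl
  inv_mul_cancel a := Homeomorph.ext fun x => a.symm_apply_apply x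

@[simp] lemma homeo_mul_apply {X : Type*} [TopologicalSpace X] (f g : X ≃ₜ X) (x : X) :
    (f * g) x = f (g x) := rfl

@[simp] lemma homeo_one_apply {X : Type*} [TopologicalSpace X] (x : X) :
    (1 : X ≃ₜ X) x = x := rfl

lemma homeo_zpow_add_apply {X : Type*} [TopologicalSpace X] (φ : X ≃ₜ X) (a b : ℤ) (x : X) :
    (φ ^ (a + b)) x = (φ ^ a) ((φ ^ b) x) := by
  rw [zpow_add]; rfl

/-- A *Cantor space* is a topological space homeomorphic to `{0,1}^ℕ`. -/
def IsCantorSpace (X : Type*) [TopologicalSpace X] : Prop :=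
  Nonempty (X ≃ₜ (ℕ → Bool))

/-- A homeomorphism is *minimal* if every `ℤ`-orbit `{φ^n x : n ∈ ℤ}` is dense. -/
def IsMinimalHomeo {X : Type*} [TopologicalSpace X] (φ : X ≃ₜ X) : Prop :=
  ∀ x : X, Dense (Set.range fun n : ℤ => (φ ^ n) x)

/-- The topological full group of a homeomorphism `φ`: all homeomorphisms `γ` admitting a
continuous orbit cocycle `f : X → ℤ` with `γ x = φ ^ (f x) x` for all `x`. -/
def topFullGroup {X : Type*} [TopologicalSpace X] (φ : X ≃ₜ X) : Subgroup (X ≃ₜ X) where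
  carrier := {γ | ∃ f : X → ℤ, Continuous f ∧ ∀ x, γ x = (φ ^ f x) x}
  one_mem' := ⟨fun _ => 0, continuous_const, fun x => by simp⟩
  mul_mem' := by
    rintro γ₁ γ₂ ⟨f₁, hf₁, h₁⟩ ⟨f₂, hf₂, h₂⟩
    refine ⟨fun x => f₁ (γ₂ x) + f₂ x, (hf₁.comp γ₂.continuous).add hf₂, fun x => ?_⟩
    rw [homeo_mul_apply, homeo_zpow_add_apply, ← h₂ x, ← h₁ (γ₂ x)]
  inv_mem' := by
    rintro γ ⟨f, hf, h⟩
    refine ⟨fun x => -(f (γ⁻¹ x)), (hf.comp (γ⁻¹ : X ≃ₜ X).continuous).neg, fun x => ?_⟩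
    have h1 : γ (γ⁻¹ x) = (φ ^ f (γ⁻¹ x)) (γ⁻¹ x) := h (γ⁻¹ x)
    have h2 : γ (γ⁻¹ x) = x := γ.apply_symm_apply x
    have h3 := h1.symm.trans h2
    calc γ⁻¹ x = (φ ^ (-(f (γ⁻¹ x)) + f (γ⁻¹ x))) (γ⁻¹ x) := by simp
    _ = (φ ^ (-(f (γ⁻¹ x)))) ((φ ^ (f (γ⁻¹ x))) (γ⁻¹ x)) := homeo_zpow_add_apply ..
    _ = (φ ^ (-(f (γ⁻¹ x)))) x := by rw [h3]

open Set Filter Topology TopologicalSpace MeasureTheory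
open scoped ENNReal BoundedContinuousFunction

section FullGroup

variable {X : Type*} [TopologicalSpace X]

lemma homeo_zpow_natCast_apply (φ : X ≃ₜ X) (n : ℕ) (x : X) : (φ ^ (n : ℤ)) x = (⇑φ)^[n] x := by
  rw [zpow_natCast]
  induction n generalizing x with
  | zero => rfl
  | succ n ih => rw [pow_succ, homeo_mul_apply, ih, Function.iterate_succ_apply]

lemma homeo_zpow_neg_apply_zpow_apply (φ : X ≃ₜ X) (n : ℤ) (x : X) :
    (φ ^ (-n)) ((φ ^ n) x) = x := by
  rw [← homeo_zpow_add_apply, neg_add_cancel, zpow_zero, homeo_one_apply]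

lemma continuous_zpow_apply (φ : X ≃ₜ X) {k : X → ℤ} (hk : Continuous k) :
    Continuous fun x => (φ ^ k x) x :=
  ((continuous_prod_of_discrete_left (f := fun p : ℤ × X => (φ ^ p.1) p.2)).2
    fun n => (φ ^ n).continuous).comp (hk.prodMk continuous_id)

lemma exists_mem_topFullGroup_of_involutive (φ : X ≃ₜ X) {c : X → ℤ} (hc : Continuous c)
    (hinv : Function.Involutive fun x => (φ ^ c x) x) :
    ∃ γ ∈ topFullGroup φ, γ * γ = 1 ∧ ∀ x, γ x = (φ ^ c x) x :=
  ⟨{ toEquiv := hinv.toPerm _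
     continuous_toFun := continuous_zpow_apply φ hc
     continuous_invFun := continuous_zpow_apply φ hc },
    ⟨c, hc, fun _ => rfl⟩, Homeomorph.ext hinv, fun _ => rfl⟩

open Classical in
/-- The cocycle of the involution exchanging each `x ∈ B` with `(φ ^ k x) x`. -/
noncomputable def swapCocycle (φ : X ≃ₜ X) (B : Set X) (k : X → ℤ) (x : X) : ℤ :=
  if x ∈ B then k x else if h : x ∈ (fun x => (φ ^ k x) x) '' B then -k h.choose else 0

section SwapCocycle

variable {φ : X ≃ₜ X} {B : Set X} {k : X → ℤ}

lemma swapCocycle_of_mem {x : X} (hx : x ∈ B) : swapCocycle φ B k x = k x := if_pos hx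

lemma swapCocycle_apply_image (hinj : InjOn (fun x => (φ ^ k x) x) B)
    (hdisj : Disjoint B ((fun x => (φ ^ k x) x) '' B)) {z : X} (hz : z ∈ B) :
    swapCocycle φ B k ((φ ^ k z) z) = -k z := by
  have hTz : (φ ^ k z) z ∈ (fun x => (φ ^ k x) x) '' B := mem_image_of_mem _ hz
  simp only [swapCocycle, if_neg (disjoint_right.1 hdisj hTz), dif_pos hTz,
    hinj hTz.choose_spec.1 hz hTz.choose_spec.2]

lemma swapCocycle_of_notMem {x : X} (hx : x ∉ B ∪ (fun x => (φ ^ k x) x) '' B) :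
    swapCocycle φ B k x = 0 := by
  simp only [mem_union, not_or] at hx
  simp only [swapCocycle, if_neg hx.1, dif_neg hx.2]

/-- Near `(φ ^ k z) z` the cocycle is constant because `φ ^ k z` maps the open set
`B ∩ k ⁻¹' {k z}` onto a neighbourhood of that point; off `B` and its image it vanishes, and the
image is closed, being compact. -/
lemma continuous_swapCocycle [CompactSpace X] [T2Space X] (hB : IsClopen B) (hk : Continuous k)
    (hinj : InjOn (fun x => (φ ^ k x) x) B) (hdisj : Disjoint B ((fun x => (φ ^ k x) x) '' B)) :
    Continuous (swapCocycle φ B k) := by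
  have hfiber : ∀ n, IsOpen (B ∩ k ⁻¹' {n}) := fun n =>
    hB.isOpen.inter (hk.isOpen_preimage _ (isOpen_discrete _))
  refine ((IsLocallyConstant.iff_eventually_eq _).2 fun x => ?_).continuous
  by_cases hxB : x ∈ B
  · filter_upwards [(hfiber (k x)).mem_nhds ⟨hxB, rfl⟩] with y hy
    rw [swapCocycle_of_mem hy.1, swapCocycle_of_mem hxB, hy.2]
  by_cases hxT : x ∈ (fun x => (φ ^ k x) x) '' B
  · obtain ⟨z, hz, rfl⟩ := hxT
    filter_upwards [((φ ^ k z).isOpenMap _ (hfiber (k z))).mem_nhds ⟨z, ⟨hz, rfl⟩, rfl⟩]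
      with y hy
    obtain ⟨z', ⟨hz', hkz' : k z' = k z⟩, rfl⟩ := hy
    have hz'T : (φ ^ k z) z' = (φ ^ k z') z' := by rw [hkz']
    rw [hz'T, swapCocycle_apply_image hinj hdisj hz', hkz']
    exact (swapCocycle_apply_image hinj hdisj hz).symm
  · have hclosed : IsClosed (B ∪ (fun x => (φ ^ k x) x) '' B) :=
      hB.isClosed.union (hB.isClosed.isCompact.image (continuous_zpow_apply φ hk)).isClosed
    have hx : x ∉ B ∪ (fun x => (φ ^ k x) x) '' B := by simp [hxB, hxT]
    filter_upwards [hclosed.isOpen_compl.mem_nhds hx] with y hy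
    rw [swapCocycle_of_notMem hy, swapCocycle_of_notMem hx]

lemma involutive_swapCocycle (hinj : InjOn (fun x => (φ ^ k x) x) B)
    (hdisj : Disjoint B ((fun x => (φ ^ k x) x) '' B)) :
    Function.Involutive fun x => (φ ^ swapCocycle φ B k x) x := by
  have hback : ∀ z ∈ B, (φ ^ swapCocycle φ B k ((φ ^ k z) z)) ((φ ^ k z) z) = z := fun z hz => by
    rw [swapCocycle_apply_image hinj hdisj hz]
    exact homeo_zpow_neg_apply_zpow_apply φ (k z) z
  intro x
  by_cases hxB : x ∈ B
  · simp only [swapCocycle_of_mem hxB]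
    exact hback x hxB
  by_cases hxT : x ∈ (fun x => (φ ^ k x) x) '' B
  · obtain ⟨z, hz, rfl⟩ := hxT
    simp only [hback z hz, swapCocycle_of_mem hz]
  · have hx : x ∉ B ∪ (fun x => (φ ^ k x) x) '' B := by simp [hxB, hxT]
    simp only [swapCocycle_of_notMem hx, zpow_zero, homeo_one_apply]

end SwapCocycle

theorem exists_involution_of_injOn [CompactSpace X] [T2Space X] (φ : X ≃ₜ X) {B : Set X}
    (hB : IsClopen B) {k : X → ℤ} (hk : Continuous k) (hinj : InjOn (fun x => (φ ^ k x) x) B)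
    (hdisj : Disjoint B ((fun x => (φ ^ k x) x) '' B)) :
    ∃ γ ∈ topFullGroup φ, γ * γ = 1 ∧ EqOn γ (fun x => (φ ^ k x) x) B ∧
      ∀ x ∉ B ∪ (fun x => (φ ^ k x) x) '' B, γ x = x := by
  obtain ⟨γ, hγ, hγ2, hγc⟩ := exists_mem_topFullGroup_of_involutive φ
    (continuous_swapCocycle hB hk hinj hdisj) (involutive_swapCocycle hinj hdisj)
  refine ⟨γ, hγ, hγ2, fun x hx => by rw [hγc, swapCocycle_of_mem hx], fun x hx => ?_⟩
  rw [hγc, swapCocycle_of_notMem hx, zpow_zero, homeo_one_apply]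

end FullGroup

lemma continuous_birkhoffSum {X M : Type*} [TopologicalSpace X] [TopologicalSpace M]
    [AddCommMonoid M] [ContinuousAdd M] {f : X → X} {g : X → M} (hf : Continuous f)
    (hg : Continuous g) (n : ℕ) :
    Continuous (birkhoffSum f g n) :=
  continuous_finsetSum _ fun j _ => hg.comp (hf.iterate j)

section Matching

variable {X : Type*} {f : X → X} {g : X → ℤ}

variable (f g) in
/-- The point `x` is matched with `f^[matchTime f g x] x`: the running balance of `g`, started just
after `x`, first becomes positive there. -/
noncomputable def matchTime (x : X) : ℕ := sInf {n | 0 < birkhoffSum f g n (f x)}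

lemma birkhoffSum_matchTime_pos {N : ℕ} (hN : ∀ x, 0 < birkhoffSum f g N x) (x : X) :
    0 < birkhoffSum f g (matchTime f g x) (f x) :=
  Nat.sInf_mem (s := {n | 0 < birkhoffSum f g n (f x)}) ⟨N, hN (f x)⟩

lemma birkhoffSum_nonpos_of_lt_matchTime {x : X} {m : ℕ} (hm : m < matchTime f g x) :
    birkhoffSum f g m (f x) ≤ 0 :=
  not_lt.1 (Nat.notMem_of_lt_sInf hm)

lemma matchTime_pos {N : ℕ} (hN : ∀ x, 0 < birkhoffSum f g N x) (x : X) : 0 < matchTime f g x := by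
  refine Nat.pos_of_ne_zero fun h => ?_
  simpa [h] using birkhoffSum_matchTime_pos hN x

lemma birkhoffSum_matchTime {N : ℕ} (hN : ∀ x, 0 < birkhoffSum f g N x) (x : X) :
    birkhoffSum f g (matchTime f g x) (f x) =
      birkhoffSum f g (matchTime f g x - 1) (f x) + g (f^[matchTime f g x] x) := by
  obtain ⟨m, hm⟩ := Nat.exists_eq_add_one.2 (matchTime_pos hN x)
  rw [hm, birkhoffSum_succ, Nat.add_sub_cancel, Function.iterate_succ_apply]

lemma pos_apply_iterate_matchTime {N : ℕ} (hN : ∀ x, 0 < birkhoffSum f g N x) (x : X) :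
    0 < g (f^[matchTime f g x] x) := by
  have := birkhoffSum_nonpos_of_lt_matchTime (Nat.sub_one_lt (matchTime_pos hN x).ne')
  linarith [birkhoffSum_matchTime hN x, birkhoffSum_matchTime_pos hN x]

lemma birkhoffSum_matchTime_le_one {N : ℕ} (hN : ∀ x, 0 < birkhoffSum f g N x)
    (hg : ∀ x, g x ≤ 1) (x : X) : birkhoffSum f g (matchTime f g x) (f x) ≤ 1 := by
  have := birkhoffSum_nonpos_of_lt_matchTime (Nat.sub_one_lt (matchTime_pos hN x).ne')
  linarith [birkhoffSum_matchTime hN x, hg (f^[matchTime f g x] x)]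

/-- Matched pairs nest like brackets: if `z' = f^[d] z` with `g z' < 0` lies strictly between `z`
and its partner, the balance of `z` is at most `-1` at `z'`, and from there to the partner of `z'`
it rises by at most `1`, so `z` is not yet matched at that point. -/
lemma eq_of_iterate_matchTime_eq {N : ℕ} (hN : ∀ x, 0 < birkhoffSum f g N x)
    (hf : Function.Injective f) (hg : ∀ x, g x ≤ 1) {z z' : X} (hz' : g z' < 0)
    (hle : matchTime f g z' ≤ matchTime f g z)
    (heq : f^[matchTime f g z] z = f^[matchTime f g z'] z') : z = z' := by
  obtain ⟨d, hd⟩ := Nat.exists_eq_add_of_le hle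
  have hz'd : f^[d] z = z' := by
    apply hf.iterate (matchTime f g z')
    rw [← heq, hd, Function.iterate_add_apply]
  rcases d with _ | d
  · exact hz'd
  have hd_lt : d < matchTime f g z := by have := matchTime_pos hN z'; omega
  have hdrop : birkhoffSum f g (d + 1) (f z) = birkhoffSum f g d (f z) + g z' := by
    rw [birkhoffSum_succ, ← Function.iterate_succ_apply, hz'd]
  have hsplit : birkhoffSum f g (matchTime f g z) (f z) =
      birkhoffSum f g (d + 1) (f z) + birkhoffSum f g (matchTime f g z') (f z') := by
    rw [hd, add_comm, birkhoffSum_add, ← Function.iterate_succ_apply, Function.iterate_succ_apply',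
      hz'd]
  linarith [birkhoffSum_matchTime_pos hN z, birkhoffSum_nonpos_of_lt_matchTime hd_lt,
    birkhoffSum_matchTime_le_one hN hg z']

lemma injOn_iterate_matchTime {N : ℕ} (hN : ∀ x, 0 < birkhoffSum f g N x)
    (hf : Function.Injective f) (hg : ∀ x, g x ≤ 1) :
    InjOn (fun x => f^[matchTime f g x] x) {x | g x < 0} := by
  intro z hz z' hz' heq
  rcases le_total (matchTime f g z') (matchTime f g z) with hle | hle
  · exact eq_of_iterate_matchTime_eq hN hf hg hz' hle heq
  · exact (eq_of_iterate_matchTime_eq hN hf hg hz hle heq.symm).symm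

lemma continuous_matchTime [TopologicalSpace X] {N : ℕ} (hN : ∀ x, 0 < birkhoffSum f g N x)
    (hf : Continuous f) (hg : Continuous g) : Continuous (matchTime f g) := by
  refine ((IsLocallyConstant.iff_eventually_eq _).2 fun x => ?_).continuous
  have hS : ∀ m, ∀ᶠ z in 𝓝 x, birkhoffSum f g m (f z) = birkhoffSum f g m (f x) := fun m =>
    ((continuous_birkhoffSum hf hg m).comp hf).continuousAt.eventually_mem
      ((isOpen_discrete {_}).mem_nhds rfl)
  filter_upwards [hS (matchTime f g x), (Finset.range (matchTime f g x)).eventually_all.2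
    fun m _ => hS m] with z hzk hz
  have hzpos : 0 < birkhoffSum f g (matchTime f g x) (f z) :=
    hzk ▸ birkhoffSum_matchTime_pos hN x
  refine le_antisymm (Nat.sInf_le hzpos) (le_csInf ⟨_, hzpos⟩ fun m hm => not_lt.1 fun hlt => ?_)
  have hmpos : 0 < birkhoffSum f g m (f z) := hm
  linarith [hz m (Finset.mem_range.2 hlt), birkhoffSum_nonpos_of_lt_matchTime hlt]

end Matching

section KrylovBogolyubov

variable {X : Type*}

noncomputable def empiricalMeasure [MeasurableSpace X] (f : X → X) (n : ℕ) (x : X) : Measure X :=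
  (n : ℝ≥0∞)⁻¹ • ∑ j ∈ Finset.range n, Measure.dirac (f^[j] x)

lemma isProbabilityMeasure_empiricalMeasure [MeasurableSpace X] (f : X → X) {n : ℕ}
    (hn : n ≠ 0) (x : X) : IsProbabilityMeasure (empiricalMeasure f n x) := by
  constructor
  simp [empiricalMeasure, ENNReal.inv_mul_cancel (Nat.cast_ne_zero.2 hn) (ENNReal.natCast_ne_top n)]

lemma integral_empiricalMeasure [TopologicalSpace X] [MeasurableSpace X]
    [MeasurableSingletonClass X] (f : X → X) (n : ℕ) (x : X) (g : X →ᵇ ℝ) :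
    ∫ y, g y ∂empiricalMeasure f n x = birkhoffAverage ℝ f g n x := by
  rw [empiricalMeasure, integral_smul_measure, integral_finsetSum_measure
    fun j _ => integrable_dirac enorm_lt_top]
  simp [birkhoffAverage, birkhoffSum, integral_dirac]

lemma tendsto_birkhoffAverage_apply_sub_birkhoffAverage_seq [TopologicalSpace X] (f : X → X)
    (g : X →ᵇ ℝ) (y : ℕ → X) :
    Tendsto (fun n => birkhoffAverage ℝ f g (n + 1) (f (y n)) -
      birkhoffAverage ℝ f g (n + 1) (y n)) atTop (𝓝 0) := by
  have hbound : Tendsto (fun n : ℕ => 2 * ‖g‖ / (n + 1 : ℕ)) atTop (𝓝 0) :=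
    tendsto_const_nhds.div_atTop (tendsto_natCast_atTop_atTop.comp (tendsto_add_atTop_nat 1))
  refine squeeze_zero_norm (fun n => ?_) hbound
  rw [← dist_eq_norm, dist_birkhoffAverage_apply_birkhoffAverage]
  gcongr
  exact g.dist_le_two_norm _ _

lemma birkhoffAverage_comp_apply (f : X → X) (g : X → ℝ) (n : ℕ) (x : X) :
    birkhoffAverage ℝ f (g ∘ f) n x = birkhoffAverage ℝ f g n (f x) := by
  simp only [birkhoffAverage, birkhoffSum, Function.comp_apply, ← Function.iterate_succ_apply' f,
    Function.iterate_succ_apply]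

variable [TopologicalSpace X] [MetrizableSpace X] [CompactSpace X] [MeasurableSpace X]
  [BorelSpace X]

/-- Krylov–Bogolyubov: a weak limit point of the empirical measures of the given orbit segments is
invariant. -/
theorem exists_measurePreserving_integral_nonpos {f : X → X} (hf : Continuous f) (g : X →ᵇ ℝ)
    (h : ∀ n, ∃ y, birkhoffSum f g (n + 1) y ≤ 0) :
    ∃ μ : Measure X, IsProbabilityMeasure μ ∧ MeasurePreserving f μ μ ∧ ∫ x, g x ∂μ ≤ 0 := by
  choose y hy using h
  let ν : ℕ → ProbabilityMeasure X := fun n =>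
    ⟨empiricalMeasure f (n + 1) (y n), isProbabilityMeasure_empiricalMeasure f n.succ_ne_zero _⟩
  let 𝒰 := Ultrafilter.of (atTop : Filter ℕ)
  obtain ⟨μ, -, hνμ⟩ := isCompact_univ.ultrafilter_le_nhds (𝒰.map ν) (by simp)
  have hlim : ∀ u : X →ᵇ ℝ, Tendsto (fun n => birkhoffAverage ℝ f u (n + 1) (y n)) 𝒰
      (𝓝 (∫ x, u x ∂(μ : Measure X))) := fun u => by
    simpa [ν, integral_empiricalMeasure] using
      ProbabilityMeasure.tendsto_iff_forall_integral_tendsto.1 hνμ u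
  refine ⟨μ, inferInstance, ⟨hf.measurable, ?_⟩, ?_⟩
  · refine ext_of_forall_integral_eq_of_IsFiniteMeasure fun u => ?_
    rw [integral_map hf.aemeasurable u.continuous.aestronglyMeasurable]
    have hshift := (tendsto_birkhoffAverage_apply_sub_birkhoffAverage_seq f u y).mono_left
      (Ultrafilter.of_le atTop)
    refine tendsto_nhds_unique (hlim (u.compContinuous ⟨f, hf⟩)) ?_
    simpa [birkhoffAverage_comp_apply] using (hlim u).add hshift
  · exact le_of_tendsto' (hlim g) fun n => mul_nonpos_of_nonneg_of_nonpos (by positivity) (hy n)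

end KrylovBogolyubov

section IndicatorDifference

variable {X : Type*} (A B : Set X) (x : X)

lemma indicator_sub_indicator_le_one : (A.indicator 1 - B.indicator 1 : X → ℤ) x ≤ 1 := by
  by_cases hA : x ∈ A <;> by_cases hB : x ∈ B <;> simp [hA, hB]

lemma indicator_sub_indicator_neg_iff :
    (A.indicator 1 - B.indicator 1 : X → ℤ) x < 0 ↔ x ∈ B \ A := by
  by_cases hA : x ∈ A <;> by_cases hB : x ∈ B <;> simp [hA, hB]

lemma indicator_sub_indicator_pos_iff :
    0 < (A.indicator 1 - B.indicator 1 : X → ℤ) x ↔ x ∈ A \ B := by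
  by_cases hA : x ∈ A <;> by_cases hB : x ∈ B <;> simp [hA, hB]

lemma intCast_indicator_sub_indicator :
    ((A.indicator 1 - B.indicator 1 : X → ℤ) x : ℝ) = A.indicator 1 x - B.indicator 1 x := by
  by_cases hA : x ∈ A <;> by_cases hB : x ∈ B <;> simp [hA, hB]

lemma continuous_indicator_sub_indicator [TopologicalSpace X] {A B : Set X} (hA : IsClopen A)
    (hB : IsClopen B) : Continuous (A.indicator 1 - B.indicator 1 : X → ℤ) :=
  (hA.continuous_indicator continuous_const).sub (hB.continuous_indicator continuous_const)

end IndicatorDifference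

theorem exists_forall_birkhoffSum_indicator_sub_indicator_pos {X : Type*} [TopologicalSpace X]
    [MetrizableSpace X] [CompactSpace X] [MeasurableSpace X] [BorelSpace X] {φ : X → X}
    (hφ : Continuous φ) {A B : Set X} (hA : IsClopen A) (hB : IsClopen B)
    (hAB : ∀ μ : Measure X, IsProbabilityMeasure μ → MeasurePreserving φ μ μ → μ B < μ A) :
    ∃ N, ∀ x, 0 < birkhoffSum φ (A.indicator 1 - B.indicator 1 : X → ℤ) N x := by
  by_contra! h
  let G : X →ᵇ ℝ := .mkOfCompact ⟨fun x => ((A.indicator 1 - B.indicator 1 : X → ℤ) x : ℝ),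
    continuous_of_discreteTopology.comp (continuous_indicator_sub_indicator hA hB)⟩
  obtain ⟨μ, hμ, hφμ, hint⟩ := exists_measurePreserving_integral_nonpos hφ G fun n => by
    obtain ⟨y, hy⟩ := h (n + 1)
    refine ⟨y, ?_⟩
    have hcast : (Int.castAddHom ℝ) (birkhoffSum φ (A.indicator 1 - B.indicator 1 : X → ℤ)
        (n + 1) y) ≤ 0 := Int.cast_nonpos.2 hy
    rwa [map_birkhoffSum] at hcast
  have hreal : μ.real B < μ.real A :=
    (ENNReal.toReal_lt_toReal (measure_ne_top _ _) (measure_ne_top _ _)).2 (hAB μ hμ hφμ)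
  have hG : ∫ x, G x ∂μ = μ.real A - μ.real B := by
    simp only [G, BoundedContinuousFunction.mkOfCompact_apply, ContinuousMap.coe_mk,
      intCast_indicator_sub_indicator]
    rw [integral_sub ((integrable_const 1).indicator hA.isOpen.measurableSet)
      ((integrable_const 1).indicator hB.isOpen.measurableSet),
      integral_indicator_one hA.isOpen.measurableSet,
      integral_indicator_one hB.isOpen.measurableSet]
  linarith

lemma image_subset_and_eq_self_of_eqOn_sdiff {X : Type*} {A B : Set X} {γ T : X → X}
    (hT : MapsTo T (B \ A) (A \ B)) (hγT : EqOn γ T (B \ A))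
    (hfix : ∀ x ∉ B \ A ∪ T '' (B \ A), γ x = x) :
    γ '' B ⊆ A ∧ ∀ x ∉ B ∪ γ '' B, γ x = x := by
  have hγimg : γ '' (B \ A) = T '' (B \ A) := hγT.image_eq
  refine ⟨?_, fun x hx => hfix x fun h => hx ?_⟩
  · rintro _ ⟨x, hxB, rfl⟩
    by_cases hxA : x ∈ A
    · rwa [hfix x]
      rintro (h | ⟨z, hz, hzx⟩)
      · exact h.2 hxA
      · exact (hT hz).2 (hzx ▸ hxB)
    · exact hγT ⟨hxB, hxA⟩ ▸ (hT ⟨hxB, hxA⟩).1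
  · rw [← hγimg] at h
    exact union_subset_union sdiff_subset (image_mono sdiff_subset) h

open MeasureTheory in
theorem glasner_weiss_general {X : Type*} [TopologicalSpace X] [MeasurableSpace X] [BorelSpace X]
    (hX : IsCantorSpace X) (φ : X ≃ₜ X)
    (A B : Set X) (hA : IsClopen A) (hB : IsClopen B)
    (hAB : ∀ μ : Measure X, IsProbabilityMeasure μ →
      (∀ E : Set X, MeasurableSet E → μ (φ ⁻¹' E) = μ E) → μ B < μ A) :
    ∃ γ ∈ topFullGroup φ, ⇑γ '' B ⊆ A ∧ γ * γ = 1 ∧ ∀ x ∉ B ∪ ⇑γ '' B, γ x = x := by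
  obtain ⟨e⟩ := hX
  have : CompactSpace X := e.symm.compactSpace
  have : MetrizableSpace X := e.isEmbedding.metrizableSpace
  obtain ⟨N, hN⟩ := exists_forall_birkhoffSum_indicator_sub_indicator_pos φ.continuous hA hB
    fun μ hμ hφμ => hAB μ hμ fun E hE => hφμ.measure_preimage hE.nullMeasurableSet
  set k := matchTime φ (A.indicator 1 - B.indicator 1 : X → ℤ)
  have hT : (fun x => (φ ^ (k x : ℤ)) x) = fun x => (⇑φ)^[k x] x :=
    funext fun x => homeo_zpow_natCast_apply φ _ x
  have hinj : InjOn (fun x => (⇑φ)^[k x] x) (B \ A) := by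
    have := injOn_iterate_matchTime hN φ.injective (indicator_sub_indicator_le_one A B)
    rwa [show {x | (A.indicator 1 - B.indicator 1 : X → ℤ) x < 0} = B \ A from
      ext (indicator_sub_indicator_neg_iff A B)] at this
  have hmaps : MapsTo (fun x => (⇑φ)^[k x] x) (B \ A) (A \ B) := fun x _ =>
    (indicator_sub_indicator_pos_iff A B _).1 (pos_apply_iterate_matchTime hN x)
  obtain ⟨γ, hγ, hγ2, hγT, hγfix⟩ := exists_involution_of_injOn φ (hB.diff hA)
    (k := fun x => (k x : ℤ))
    (continuous_of_discreteTopology.comp (continuous_matchTime hN φ.continuous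
      (continuous_indicator_sub_indicator hA hB)))
    (hT ▸ hinj) (hT ▸ disjoint_sdiff_sdiff.mono_right hmaps.image_subset)
  rw [hT] at hγT hγfix
  obtain ⟨hγB, hγsupp⟩ := image_subset_and_eq_self_of_eqOn_sdiff hmaps hγT hγfix
  exact ⟨γ, hγ, hγB, hγ2, hγsupp⟩

open MeasureTheory in
/-- Glasner–Weiss. If `A`, `B` are clopen sets with `μ B < μ A` for every
`φ`-invariant Borel probability measure `μ`, there is an involution `γ` in the topological
full group with `γ(B) ⊆ A`, supported on `B ∪ γ(B)`. -/
theorem glasner_weiss {X : Type*} [TopologicalSpace X] [MeasurableSpace X] [BorelSpace X]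
    (hX : IsCantorSpace X) (φ : X ≃ₜ X) (hmin : IsMinimalHomeo φ)
    (A B : Set X) (hA : IsClopen A) (hB : IsClopen B)
    (hAB : ∀ μ : Measure X, IsProbabilityMeasure μ →
      (∀ E : Set X, MeasurableSet E → μ (φ ⁻¹' E) = μ E) → μ B < μ A) :
    ∃ γ ∈ topFullGroup φ, ⇑γ '' B ⊆ A ∧ γ * γ = 1 ∧ ∀ x ∉ B ∪ ⇑γ '' B, γ x = x :=
  glasner_weiss_general hX φ A B hA hB hAB
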